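/- Let n ≥ 4, let C be a totally traceless generalized curvature tensor on Minkowski space ℝ^n, let u be a unit timelike vector such that C is Weyl compatible with u, and let Γ be the associated tensor built from C, its electric part E, u and η. Then Γ is totally traceless: Σ_{a,b} η^{ab} Γ(e_a, x, e_b, y) = 0 for all x, y. -/

import Mathlib

open Finset

noncomputable section

/-- A 4-argument real tensor on `ℝ^n`. -/
abbrev Tensor4 (n : ℕ) :=
  (Fin n → ℝ) → (Fin n → ℝ) → (Fin n → ℝ) → (Fin n → ℝ) → ℝ

/-- Components of the Minkowski metric `diag(-1,1,…,1)` of signature `(-,+,…,+)`.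
Since this matrix is its own inverse, it also gives the components `η^{ab}`
of the inverse metric. -/
def ηm {n : ℕ} (a b : Fin n) : ℝ :=
  if a = b then (if (a : ℕ) = 0 then -1 else 1) else 0

/-- The Minkowski bilinear form `η` of signature `(-,+,…,+)` on `ℝ^n`. -/
def ηf {n : ℕ} (x y : Fin n → ℝ) : ℝ :=
  ∑ i : Fin n, (if (i : ℕ) = 0 then (-1 : ℝ) else 1) * x i * y i

/-- The standard basis `(e_a)` of `ℝ^n`. -/
def stdb {n : ℕ} (a : Fin n) : Fin n → ℝ := fun i => if i = a then 1 else 0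

/-- Multilinearity of a 4-argument map. -/
def Multilinear4 {n : ℕ} (C : Tensor4 n) : Prop :=
  (∀ y z w, IsLinearMap ℝ fun x => C x y z w) ∧
  (∀ x z w, IsLinearMap ℝ fun y => C x y z w) ∧
  (∀ x y w, IsLinearMap ℝ fun z => C x y z w) ∧
  (∀ x y z, IsLinearMap ℝ fun w => C x y z w)

/-- Bilinearity of a 2-argument map. -/
def Bilinear2 {n : ℕ} (S : (Fin n → ℝ) → (Fin n → ℝ) → ℝ) : Prop :=
  (∀ y, IsLinearMap ℝ fun x => S x y) ∧ (∀ x, IsLinearMap ℝ fun y => S x y)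

/-- A generalized curvature tensor: a multilinear map with the algebraic
symmetries of the Riemann tensor (antisymmetry in the first and the last pair,
pair-exchange symmetry, and the first Bianchi identity). -/
def IsGenCurv {n : ℕ} (C : Tensor4 n) : Prop :=
  Multilinear4 C ∧
  (∀ x y z w, C x y z w = - C y x z w) ∧
  (∀ x y z w, C x y z w = - C x y w z) ∧
  (∀ x y z w, C x y z w = C z w x y) ∧
  (∀ x y z w, C x y z w + C y z x w + C z x y w = 0)

/-- Total tracelessness: `Σ_{a,b} η^{ab} C(e_a, x, e_b, y) = 0`. -/
def TotallyTraceless {n : ℕ} (C : Tensor4 n) : Prop :=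
  ∀ x y, (∑ a, ∑ b, ηm a b * C (stdb a) x (stdb b) y) = 0

/-- Weyl compatibility of `C` with the vector `u`. -/
def WeylCompatible {n : ℕ} (C : Tensor4 n) (u : Fin n → ℝ) : Prop :=
  ∀ x y z w,
    ηf u x * C y z w u + ηf u y * C z x w u + ηf u z * C x y w u = 0

/-- The electric part of `C` relative to `u`: `E(x,y) = C(u,x,y,u)`. -/
def electric {n : ℕ} (C : Tensor4 n) (u : Fin n → ℝ)
    (x y : Fin n → ℝ) : ℝ :=
  C u x y u

/-- Full η-self-contraction `T² = Σ T_{abcd} T^{abcd}` of a 4-tensor. -/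
def sq4 {n : ℕ} (T : Tensor4 n) : ℝ :=
  ∑ a, ∑ a', ∑ b, ∑ b', ∑ c, ∑ c', ∑ d, ∑ d',
    ηm a a' * ηm b b' * ηm c c' * ηm d d' *
      T (stdb a) (stdb b) (stdb c) (stdb d) *
      T (stdb a') (stdb b') (stdb c') (stdb d')

/-- Full η-self-contraction `S² = Σ S_{ab} S^{ab}` of a 2-tensor. -/
def sq2 {n : ℕ} (S : (Fin n → ℝ) → (Fin n → ℝ) → ℝ) : ℝ :=
  ∑ a, ∑ a', ∑ b, ∑ b',
    ηm a a' * ηm b b' * S (stdb a) (stdb b) * S (stdb a') (stdb b')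

/-- The tensor `Γ` associated with `C`, its electric part `E`, `u` and `η`. -/
def Γt {n : ℕ} (C : Tensor4 n) (u : Fin n → ℝ) : Tensor4 n :=
  fun x y z w =>
    C x y z w
      - ((n : ℝ) - 2) / ((n : ℝ) - 3) *
          (ηf u x * ηf u w * electric C u y z - ηf u y * ηf u w * electric C u x z
            - ηf u x * ηf u z * electric C u y w + ηf u y * ηf u z * electric C u x w)
      - 1 / ((n : ℝ) - 3) *
          (ηf x w * electric C u y z - ηf y w * electric C u x z
            - ηf x z * electric C u y w + ηf y z * electric C u x w)

/-!
With the Kulkarni–Nomizu product `⊙`, `Γ = C - (n-2)/(n-3) • (u♭ ⊗ u♭) ⊙ E - 1/(n-3) • η ⊙ E`,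
and the `(1,3)`-trace is linear. The antisymmetries of `C` give `E(u, ·) = E(·, u) = 0`, and
together with the tracelessness of `C` also `tr E = 0`. Hence the trace of `(u♭ ⊗ u♭) ⊙ E` is
`-η(u,u) E = E`, that of `η ⊙ E` is `(2 - n) E`, and the two coefficients make them cancel
against each other.
-/

variable {n : ℕ}

lemma ηm_self_mul_self (a : Fin n) : ηm a a * ηm a a = 1 := by
  simp only [ηm, if_true]; split <;> norm_num

lemma sum_sum_ηm_mul (f : Fin n → Fin n → ℝ) :
    ∑ a, ∑ b, ηm a b * f a b = ∑ a, ηm a a * f a a := by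
  refine sum_congr rfl fun a _ => ?_
  rw [sum_eq_single a] <;> simp +contextual [ηm, Ne.symm]

lemma ηf_comm (x y : Fin n → ℝ) : ηf x y = ηf y x := by
  unfold ηf; exact sum_congr rfl fun i _ => by ring

lemma ηf_stdb (v : Fin n → ℝ) (a : Fin n) : ηf v (stdb a) = ηm a a * v a := by
  unfold ηf stdb ηm
  rw [sum_eq_single a] <;> simp +contextual

lemma isLinearMap_ηf (v : Fin n → ℝ) : IsLinearMap ℝ (ηf v) where
  map_add x y := by simp only [ηf, Pi.add_apply, mul_add, sum_add_distrib]
  map_smul c x := by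
    simp only [ηf, Pi.smul_apply, smul_eq_mul, mul_sum]
    exact sum_congr rfl fun i _ => by ring

lemma IsLinearMap.sum_mul_stdb {f : (Fin n → ℝ) → ℝ} (hf : IsLinearMap ℝ f)
    (x : Fin n → ℝ) : ∑ a, x a * f (stdb a) = f x := by
  have hx : x = ∑ a, x a • stdb a := by
    ext i
    simp [stdb, Finset.sum_apply]
  calc ∑ a, x a * f (stdb a) = IsLinearMap.mk' f hf (∑ a, x a • stdb a) := by simp
    _ = f x := by rw [← hx]; rfl

lemma sum_ηm_mul_ηf_stdb_mul {f : (Fin n → ℝ) → ℝ} (hf : IsLinearMap ℝ f)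
    (v : Fin n → ℝ) : ∑ a, ηm a a * (ηf v (stdb a) * f (stdb a)) = f v := by
  simp_rw [ηf_stdb, ← mul_assoc, ηm_self_mul_self, one_mul]
  exact hf.sum_mul_stdb v

lemma sum_ηm_mul_ηf_stdb_stdb : ∑ a : Fin n, ηm a a * ηf (stdb a) (stdb a) = n := by
  simp [ηf_stdb, stdb, ηm_self_mul_self]

def trace13 (T : Tensor4 n) (x y : Fin n → ℝ) : ℝ :=
  ∑ a, ∑ b, ηm a b * T (stdb a) x (stdb b) y

def trace2 (k : (Fin n → ℝ) → (Fin n → ℝ) → ℝ) : ℝ :=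
  ∑ a, ∑ b, ηm a b * k (stdb a) (stdb b)

lemma trace13_eq_sum (T : Tensor4 n) (x y : Fin n → ℝ) :
    trace13 T x y = ∑ a, ηm a a * T (stdb a) x (stdb a) y :=
  sum_sum_ηm_mul _

lemma trace2_eq_sum (k : (Fin n → ℝ) → (Fin n → ℝ) → ℝ) :
    trace2 k = ∑ a, ηm a a * k (stdb a) (stdb a) :=
  sum_sum_ηm_mul _

lemma trace13_sub (T S : Tensor4 n) (x y : Fin n → ℝ) :
    trace13 (T - S) x y = trace13 T x y - trace13 S x y := by
  simp only [trace13, Pi.sub_apply, mul_sub, sum_sub_distrib]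

lemma trace13_smul (c : ℝ) (T : Tensor4 n) (x y : Fin n → ℝ) :
    trace13 (c • T) x y = c * trace13 T x y := by
  simp only [trace13, Pi.smul_apply, smul_eq_mul, mul_sum]
  exact sum_congr rfl fun a _ => sum_congr rfl fun b _ => by ring

def kulkarniNomizu (h k : (Fin n → ℝ) → (Fin n → ℝ) → ℝ) : Tensor4 n :=
  fun x y z w => h x w * k y z - h y w * k x z - h x z * k y w + h y z * k x w

lemma trace13_kulkarniNomizu (h k : (Fin n → ℝ) → (Fin n → ℝ) → ℝ) (x y : Fin n → ℝ) :
    trace13 (kulkarniNomizu h k) x y =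
      ∑ a, ηm a a * (h (stdb a) y * k x (stdb a)) - h x y * trace2 k
        - trace2 h * k x y + ∑ a, ηm a a * (h x (stdb a) * k (stdb a) y) := by
  simp only [trace13_eq_sum, trace2_eq_sum, kulkarniNomizu, mul_sum, sum_mul,
    ← sum_sub_distrib, ← sum_add_distrib]
  exact sum_congr rfl fun a _ => by ring

lemma trace13_kulkarniNomizu_ηf {k : (Fin n → ℝ) → (Fin n → ℝ) → ℝ} (hk : Bilinear2 k)
    (x y : Fin n → ℝ) :
    trace13 (kulkarniNomizu ηf k) x y = (2 - n) * k x y - ηf x y * trace2 k := by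
  rw [trace13_kulkarniNomizu]
  simp_rw [ηf_comm (stdb _) y, sum_ηm_mul_ηf_stdb_mul (hk.2 x),
    sum_ηm_mul_ηf_stdb_mul (hk.1 y)]
  rw [trace2_eq_sum ηf, sum_ηm_mul_ηf_stdb_stdb]
  ring

lemma trace13_kulkarniNomizu_ηf_mul_ηf {k : (Fin n → ℝ) → (Fin n → ℝ) → ℝ}
    (hk : Bilinear2 k) (u x y : Fin n → ℝ) :
    trace13 (kulkarniNomizu (fun x y => ηf u x * ηf u y) k) x y =
      ηf u y * k x u - ηf u x * ηf u y * trace2 k - ηf u u * k x y + ηf u x * k u y := by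
  have hux : ∑ a, ηm a a * (ηf u (stdb a) * ηf u y * k x (stdb a)) = ηf u y * k x u := by
    rw [← sum_ηm_mul_ηf_stdb_mul (hk.2 x) u, mul_sum]
    exact sum_congr rfl fun a _ => by ring
  have huy : ∑ a, ηm a a * (ηf u x * ηf u (stdb a) * k (stdb a) y) = ηf u x * k u y := by
    rw [← sum_ηm_mul_ηf_stdb_mul (hk.1 y) u, mul_sum]
    exact sum_congr rfl fun a _ => by ring
  rw [trace13_kulkarniNomizu, hux, huy, trace2_eq_sum fun x y => ηf u x * ηf u y,
    sum_ηm_mul_ηf_stdb_mul (isLinearMap_ηf u)]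

lemma Γt_eq_sub_kulkarniNomizu (C : Tensor4 n) (u : Fin n → ℝ) :
    Γt C u = C - (((n : ℝ) - 2) / ((n : ℝ) - 3)) •
        kulkarniNomizu (fun x y => ηf u x * ηf u y) (electric C u)
      - (1 / ((n : ℝ) - 3)) • kulkarniNomizu ηf (electric C u) :=
  rfl

section Electric

variable {C : Tensor4 n}

lemma Multilinear4.bilinear2_electric (hC : Multilinear4 C) (u : Fin n → ℝ) :
    Bilinear2 (electric C u) :=
  ⟨fun y => hC.2.1 u y u, fun x => hC.2.2.1 u x u⟩

lemma electric_self_left (hC : ∀ x y z w, C x y z w = - C y x z w) (u y : Fin n → ℝ) :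
    electric C u u y = 0 := by
  have := hC u u y u; unfold electric; linarith

lemma electric_self_right (hC : ∀ x y z w, C x y z w = - C x y w z) (u x : Fin n → ℝ) :
    electric C u x u = 0 := by
  have := hC u x u u; unfold electric; linarith

lemma trace2_electric (hC : ∀ x y z w, C x y z w = - C y x z w) (htr : TotallyTraceless C)
    (u : Fin n → ℝ) : trace2 (electric C u) = 0 := by
  have h : trace13 C u u = 0 := htr u u
  rw [trace13_eq_sum] at h
  rw [trace2_eq_sum, ← neg_eq_zero, ← h, ← sum_neg_distrib]
  exact sum_congr rfl fun a _ => by rw [electric, hC]; ring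

end Electric

theorem stmt_9_general {n : ℕ} (hn : 4 ≤ n) (C : Tensor4 n)
    (hC : IsGenCurv C) (htr : TotallyTraceless C)
    (u : Fin n → ℝ) (hu : ηf u u = -1) :
    TotallyTraceless (Γt C u) := by
  obtain ⟨hm, hanti₁, hanti₂, -, -⟩ := hC
  have hE := hm.bilinear2_electric u
  intro x y
  change trace13 _ x y = 0
  rw [Γt_eq_sub_kulkarniNomizu, trace13_sub, trace13_sub, trace13_smul, trace13_smul,
    trace13_kulkarniNomizu_ηf_mul_ηf hE, trace13_kulkarniNomizu_ηf hE,
    trace2_electric hanti₁ htr, electric_self_left hanti₁, electric_self_right hanti₂, hu,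
    show trace13 C x y = 0 from htr x y]
  have hn3 : (n : ℝ) - 3 ≠ 0 := by
    have : (4 : ℝ) ≤ n := by exact_mod_cast hn
    linarith
  field_simp
  ring

/-- for `n ≥ 4`, a totally traceless generalized curvature tensor
`C` on Minkowski `ℝ^n` Weyl compatible with a unit timelike `u`, the associated
tensor `Γ` is totally traceless. -/
theorem stmt_9 {n : ℕ} (hn : 4 ≤ n) (C : Tensor4 n)
    (hC : IsGenCurv C) (htr : TotallyTraceless C)
    (u : Fin n → ℝ) (hu : ηf u u = -1) (hW : WeylCompatible C u) :
    TotallyTraceless (Γt C u) :=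
  stmt_9_general hn C hC htr u hu
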